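/- arXiv:2502.19855 — 5 statements merged into one kernel-verified Lean document; each statement's English description precedes it below -/
import Mathlib

section
/- Let x ∈ H with ‖x‖_A = 1 and let q ∈ D. Then there exists z ∈ H with ‖z‖_A = 1 and ⟨x,z⟩_A = 0; consequently the vector y = conj(q)·x + √(1−|q|²)·z satisfies ‖y‖_A = 1 and ⟨x,y⟩_A = q. -/
/-! Gram–Schmidt for the semi-inner product `⟨·, ·⟩_A`. As `A` has rank at least two, some `A w`
lies outside `ℂ ∙ A x`; then `v = w - ⟨w, x⟩_A x` is `A`-orthogonal to `x` with `A v ≠ 0`, so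
`‖v‖_A ≠ 0` because a positive operator vanishes wherever its quadratic form does. Normalising `v`
gives `z`, and by Pythagoras `‖y‖_A ^ 2 = |q| ^ 2 + (1 - |q| ^ 2) = 1` and `⟨x, y⟩_A = q`. -/

noncomputable section

open Filter

variable {H : Type*} [NormedAddCommGroup H] [InnerProductSpace ℂ H] [CompleteSpace H]

/-- The paper's semi-inner product `⟨x, y⟩_A = ⟨A x, y⟩`, where the inner product of the
paper is linear in the *first* argument; in Mathlib's convention this is `⟪y, A x⟫_ℂ`. -/
def sipA (A : H →L[ℂ] H) (x y : H) : ℂ := inner ℂ y (A x)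

/-- The `A`-seminorm `‖x‖_A = ⟨A x, x⟩ ^ (1/2)`. -/
def semiNormA (A : H →L[ℂ] H) (x : H) : ℝ := Real.sqrt (sipA A x x).re

/-- The `A`-`q`-numerical range `W_{q,A}(T)`. -/
def WqA (A : H →L[ℂ] H) (q : ℂ) (T : H →L[ℂ] H) : Set ℂ :=
  {z | ∃ x y : H, semiNormA A x = 1 ∧ semiNormA A y = 1 ∧ sipA A x y = q ∧ z = sipA A (T x) y}

/-- The `A`-`q`-numerical radius `w_{q,A}(T)`. -/
def wqA (A : H →L[ℂ] H) (q : ℂ) (T : H →L[ℂ] H) : ℝ := sSup ((fun w : ℂ => ‖w‖) '' WqA A q T)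

/-- The `A`-operator seminorm `‖T‖_A = sup {‖T x‖_A : ‖x‖_A ≤ 1}`. -/
def opNormA (A T : H →L[ℂ] H) : ℝ :=
  sSup ((fun x => semiNormA A (T x)) '' {x : H | semiNormA A x ≤ 1})

/-- `T` is `A`-bounded: `‖T x‖_A ≤ c ‖x‖_A` for some `c > 0`. -/
def ABounded (A T : H →L[ℂ] H) : Prop := ∃ c > 0, ∀ x : H, semiNormA A (T x) ≤ c * semiNormA A x

open RCLike ComplexConjugate

namespace LinearMap

variable {𝕜 E : Type*} [RCLike 𝕜] [NormedAddCommGroup E] [InnerProductSpace 𝕜 E]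

theorem IsPositive.apply_eq_zero_of_re_inner_eq_zero {T : E →ₗ[𝕜] E} (hT : T.IsPositive)
    {v : E} (hv : re (inner 𝕜 (T v) v) = 0) : T v = 0 := by
  -- `t ↦ re ⟪T (v + t T v), v + t T v⟫` is a nonnegative quadratic with no constant term,
  -- so its linear coefficient `2 ‖T v‖ ^ 2` vanishes.
  have hquad (t : ℝ) :
      0 ≤ re (inner 𝕜 (T (T v)) (T v)) * (t * t) + 2 * ‖T v‖ ^ 2 * t + 0 := by
    have := hT.re_inner_nonneg_left (v + (t : 𝕜) • T v)
    simp only [map_add, map_smul, inner_add_left, inner_add_right, inner_smul_left,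
      inner_smul_right, hT.isSymmetric (T v) v, conj_ofReal, re_ofReal_mul, hv,
      inner_self_eq_norm_sq] at this
    linarith
  simpa [discrim] using discrim_le_zero hquad

variable {K M N : Type*} [Field K] [AddCommGroup M] [Module K M] [AddCommGroup N] [Module K N]

theorem exists_apply_notMem_span_singleton (f : M →ₗ[K] N) (hf : 1 < Module.rank K (range f))
    (u : N) : ∃ w, f w ∉ K ∙ u := by
  by_contra! h
  have hle : range f ≤ K ∙ u := by
    rintro _ ⟨w, rfl⟩
    exact h w
  exact hf.not_ge <| (Submodule.rank_mono hle).trans <|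
    (rank_span_le ({u} : Set N)).trans_eq (Cardinal.mk_singleton u)

end LinearMap

section SemiInner

variable {E : Type*} [NormedAddCommGroup E] [InnerProductSpace ℂ E] {A : E →L[ℂ] E}

theorem sipA_add_left (x x' y : E) :
    sipA A (x + x') y = sipA A x y + sipA A x' y := by
  rw [sipA, map_add, inner_add_right]; rfl

theorem sipA_add_right (x y y' : E) :
    sipA A x (y + y') = sipA A x y + sipA A x y' :=
  inner_add_left _ _ _

theorem sipA_smul_left (c : ℂ) (x y : E) :
    sipA A (c • x) y = c * sipA A x y := by
  rw [sipA, map_smul, inner_smul_right]; rfl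

theorem sipA_smul_right (c : ℂ) (x y : E) :
    sipA A x (c • y) = conj c * sipA A x y :=
  inner_smul_left _ _ _

theorem semiNormA_nonneg (x : E) : 0 ≤ semiNormA A x :=
  Real.sqrt_nonneg _

theorem semiNormA_smul (c : ℂ) (x : E) :
    semiNormA A (c • x) = ‖c‖ * semiNormA A x := by
  rw [semiNormA, semiNormA, sipA, sipA, map_smul, inner_smul_left, inner_smul_right, ← mul_assoc,
    Complex.conj_mul', ← Complex.ofReal_pow, Complex.re_ofReal_mul, Real.sqrt_mul (sq_nonneg _),
    Real.sqrt_sq (norm_nonneg _)]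

theorem conj_sipA (hA : A.IsPositive) (x y : E) : conj (sipA A x y) = sipA A y x := by
  rw [sipA, sipA, inner_conj_symm, hA.inner_left_eq_inner_right]

theorem semiNormA_eq_one_iff (hA : A.IsPositive) {x : E} :
    semiNormA A x = 1 ↔ sipA A x x = 1 := by
  have him : (sipA A x x).im = 0 := Complex.conj_eq_iff_im.mp (conj_sipA hA x x)
  rw [semiNormA, Real.sqrt_eq_one, Complex.ext_iff, him]
  simp

theorem apply_eq_zero_of_semiNormA_eq_zero (hA : A.IsPositive) {v : E}
    (hv : semiNormA A v = 0) : A v = 0 := by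
  refine hA.toLinearMap.apply_eq_zero_of_re_inner_eq_zero <|
    le_antisymm ?_ (hA.re_inner_nonneg_left v)
  rw [inner_re_symm]
  exact Real.sqrt_eq_zero'.mp hv

theorem sipA_sub_smul_self (hA : A.IsPositive) {x : E} (hx : semiNormA A x = 1) (w : E) :
    sipA A x (w - sipA A w x • x) = 0 := by
  rw [sub_eq_add_neg, ← neg_smul, sipA_add_right, sipA_smul_right, map_neg, conj_sipA hA,
    (semiNormA_eq_one_iff hA).mp hx, mul_one, add_neg_cancel]

theorem exists_semiNormA_eq_one_sipA_eq_zero (hA : A.IsPositive)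
    (hrank : 1 < Module.rank ℂ (LinearMap.range A.toLinearMap)) {x : E}
    (hx : semiNormA A x = 1) : ∃ z, semiNormA A z = 1 ∧ sipA A x z = 0 := by
  obtain ⟨w, hw⟩ := A.toLinearMap.exists_apply_notMem_span_singleton hrank (A x)
  set v := w - sipA A w x • x
  have hv : semiNormA A v ≠ 0 := fun h => hw <| by
    have hAv := apply_eq_zero_of_semiNormA_eq_zero hA h
    rw [map_sub, map_smul, sub_eq_zero] at hAv
    exact hAv ▸ Submodule.smul_mem _ _ (Submodule.mem_span_singleton_self _)
  refine ⟨((semiNormA A v)⁻¹ : ℂ) • v, ?_, ?_⟩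
  · rw [semiNormA_smul, norm_inv, Complex.norm_real, Real.norm_of_nonneg (semiNormA_nonneg v),
      inv_mul_cancel₀ hv]
  · rw [sipA_smul_right, sipA_sub_smul_self hA hx, mul_zero]

theorem sipA_smul_add_smul (hA : A.IsPositive) {x z : E} (hx : semiNormA A x = 1)
    (hxz : sipA A x z = 0) (a b : ℂ) : sipA A x (a • x + b • z) = conj a := by
  rw [sipA_add_right, sipA_smul_right, sipA_smul_right, (semiNormA_eq_one_iff hA).mp hx, hxz]
  ring

theorem semiNormA_smul_add_smul (hA : A.IsPositive) {x z : E} (hx : semiNormA A x = 1)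
    (hz : semiNormA A z = 1) (hxz : sipA A x z = 0) (a b : ℂ) :
    semiNormA A (a • x + b • z) = √(‖a‖ ^ 2 + ‖b‖ ^ 2) := by
  have hzx : sipA A z x = 0 := by rw [← conj_sipA hA, hxz, map_zero]
  have hself : sipA A (a • x + b • z) (a • x + b • z) = ((‖a‖ ^ 2 + ‖b‖ ^ 2 : ℝ) : ℂ) := by
    simp only [sipA_add_left, sipA_smul_left, sipA_add_right, sipA_smul_right,
      (semiNormA_eq_one_iff hA).mp hx, (semiNormA_eq_one_iff hA).mp hz, hxz, hzx]
    push_cast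
    rw [← Complex.mul_conj', ← Complex.mul_conj']
    ring
  rw [semiNormA, hself, Complex.ofReal_re]

end SemiInner

theorem stmt_0 (A : H →L[ℂ] H) (hA : A.IsPositive)
    (hrank : 2 ≤ Module.rank ℂ (LinearMap.range A.toLinearMap))
    (q : ℂ) (hq : ‖q‖ ≤ 1)
    (x : H) (hx : semiNormA A x = 1) :
    ∃ z : H, semiNormA A z = 1 ∧ sipA A x z = 0 ∧
      semiNormA A ((starRingEnd ℂ) q • x + (Real.sqrt (1 - ‖q‖ ^ 2) : ℂ) • z) = 1 ∧
      sipA A x ((starRingEnd ℂ) q • x + (Real.sqrt (1 - ‖q‖ ^ 2) : ℂ) • z) = q := by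
  obtain ⟨z, hz, hxz⟩ :=
    exists_semiNormA_eq_one_sipA_eq_zero hA (Cardinal.one_lt_two.trans_le hrank) hx
  have hr : ‖(√(1 - ‖q‖ ^ 2) : ℂ)‖ ^ 2 = 1 - ‖q‖ ^ 2 := by
    rw [Complex.norm_real, Real.norm_of_nonneg (Real.sqrt_nonneg _),
      Real.sq_sqrt (by nlinarith [norm_nonneg q])]
  refine ⟨z, hz, hxz, ?_, ?_⟩
  · rw [semiNormA_smul_add_smul hA hx hz hxz, hr, Complex.norm_conj, add_sub_cancel, Real.sqrt_one]
  · rw [sipA_smul_add_smul hA hx hxz, Complex.conj_conj]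
end
end

section
/- Let T be a bounded operator on a complex Hilbert space H with T² = 0, and let q ∈ D. Then W_q(T) is circular about the origin: for every λ ∈ W_q(T) and every θ ∈ ℝ, one has e^{iθ}λ ∈ W_q(T). -/
/-! Put `K = span {T x}`, so `T x ∈ K ⊆ ker T` as `T² = 0`; being finite-dimensional, `K` has an
orthogonal projection `P`. For `|c| = 1` the map
`U = P + c (1 - P)` is unitary, so `U x, U y` are unit vectors with `⟨U x, U y⟩ = q`. Since `T`
vanishes on `K`, `T U x = c T x`, and since `U` fixes `K ∋ T x`, `⟨T U x, U y⟩ = c ⟨T x, y⟩`. -/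

noncomputable section

/-- The `q`-numerical range `W_q(T) = {⟨T x, y⟩ : ‖x‖ = ‖y‖ = 1, ⟨x, y⟩ = q}`, where the
paper's inner product `⟨u, v⟩` (linear in the first argument) is Mathlib's `⟪v, u⟫_ℂ`. -/
def Wq {E : Type*} [NormedAddCommGroup E] [InnerProductSpace ℂ E]
    (q : ℂ) (T : E →L[ℂ] E) : Set ℂ :=
  {z | ∃ x y : E, ‖x‖ = 1 ∧ ‖y‖ = 1 ∧ (inner ℂ y x : ℂ) = q ∧ z = (inner ℂ y (T x) : ℂ)}

/-- The `q`-numerical radius `w_q(T)`. -/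
def wq {E : Type*} [NormedAddCommGroup E] [InnerProductSpace ℂ E]
    (q : ℂ) (T : E →L[ℂ] E) : ℝ := sSup ((fun z : ℂ => ‖z‖) '' Wq q T)

open scoped ComplexConjugate

namespace Submodule

variable {𝕜 E F : Type*} [RCLike 𝕜] [NormedAddCommGroup E] [InnerProductSpace 𝕜 E]
  (K : Submodule 𝕜 E) [K.HasOrthogonalProjection]

def phaseOnOrthogonal (c : 𝕜) (x : E) : E :=
  K.starProjection x + c • (x - K.starProjection x)

variable {K} {c : 𝕜}

theorem inner_phaseOnOrthogonal (hc : ‖c‖ = 1) (x y : E) :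
    inner 𝕜 (K.phaseOnOrthogonal c y) (K.phaseOnOrthogonal c x) = inner 𝕜 y x := by
  have hxy : inner 𝕜 (K.starProjection y) (x - K.starProjection x) = 0 :=
    inner_right_of_mem_orthogonal (K.starProjection_apply_mem y)
      (K.sub_starProjection_mem_orthogonal x)
  have hyx : inner 𝕜 (y - K.starProjection y) (K.starProjection x) = 0 :=
    inner_left_of_mem_orthogonal (K.starProjection_apply_mem x)
      (K.sub_starProjection_mem_orthogonal y)
  have hcc : conj c * c = 1 := by rw [RCLike.conj_mul, hc]; simp
  conv_rhs => rw [← add_sub_cancel (K.starProjection y) y,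
    ← add_sub_cancel (K.starProjection x) x]
  simp only [phaseOnOrthogonal, inner_add_left, inner_add_right, inner_smul_left,
    inner_smul_right, hxy, hyx, mul_zero, add_zero, zero_add]
  linear_combination inner 𝕜 (y - K.starProjection y) (x - K.starProjection x) * hcc

theorem norm_phaseOnOrthogonal (hc : ‖c‖ = 1) (x : E) : ‖K.phaseOnOrthogonal c x‖ = ‖x‖ := by
  rw [norm_eq_sqrt_re_inner (𝕜 := 𝕜), norm_eq_sqrt_re_inner (𝕜 := 𝕜),
    inner_phaseOnOrthogonal hc]

theorem inner_phaseOnOrthogonal_left_of_mem {w : E} (hw : w ∈ K) (y : E) :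
    inner 𝕜 (K.phaseOnOrthogonal c y) w = inner 𝕜 y w := by
  have hyw : inner 𝕜 (y - K.starProjection y) w = 0 :=
    inner_left_of_mem_orthogonal hw (K.sub_starProjection_mem_orthogonal y)
  rw [phaseOnOrthogonal, inner_add_left, inner_smul_left, hyw, mul_zero, add_zero,
    ← sub_eq_zero, ← inner_sub_left, ← neg_sub, inner_neg_left, hyw, neg_zero]

theorem map_phaseOnOrthogonal_of_le_ker [NormedAddCommGroup F] [NormedSpace 𝕜 F]
    {T : E →L[𝕜] F} (hK : K ≤ T.ker) (x : E) :
    T (K.phaseOnOrthogonal c x) = c • T x := by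
  have hP : T (K.starProjection x) = 0 := hK (K.starProjection_apply_mem x)
  rw [phaseOnOrthogonal, map_add, map_smul, map_sub, hP, zero_add, sub_zero]

end Submodule

theorem stmt_14_general {H : Type*} [NormedAddCommGroup H] [InnerProductSpace ℂ H]
    (T : H →L[ℂ] H) (hT2 : T * T = 0)
    (q : ℂ) :
    ∀ lam ∈ Wq q T, ∀ θ : ℝ, Complex.exp (θ * Complex.I) * lam ∈ Wq q T := by
  rintro _ ⟨x, y, hx, hy, hxy, rfl⟩ θ
  set K := ℂ ∙ T x
  have hTx : T x ∈ K := Submodule.mem_span_singleton_self _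
  have hK : K ≤ T.ker := by
    rw [Submodule.span_singleton_le_iff_mem]
    exact congr($hT2 x)
  have hc : ‖Complex.exp (θ * Complex.I)‖ = 1 := Complex.norm_exp_ofReal_mul_I θ
  refine ⟨K.phaseOnOrthogonal _ x, K.phaseOnOrthogonal _ y,
    (Submodule.norm_phaseOnOrthogonal hc x).trans hx,
    (Submodule.norm_phaseOnOrthogonal hc y).trans hy,
    (Submodule.inner_phaseOnOrthogonal hc x y).trans hxy, ?_⟩
  rw [Submodule.map_phaseOnOrthogonal_of_le_ker hK, inner_smul_right,
    Submodule.inner_phaseOnOrthogonal_left_of_mem hTx]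

theorem stmt_14 {H : Type*} [NormedAddCommGroup H] [InnerProductSpace ℂ H] [CompleteSpace H]
    (T : H →L[ℂ] H) (hT2 : T * T = 0)
    (q : ℂ) (hq : ‖q‖ ≤ 1) :
    ∀ lam ∈ Wq q T, ∀ θ : ℝ, Complex.exp (θ * Complex.I) * lam ∈ Wq q T :=
  stmt_14_general T hT2 q
end
end

section
/- Let T be a bounded operator on a complex Hilbert space H with T² = 0, and let q ∈ D. Then w_q(T) ≤ ((1 + √(1−|q|²))/2)·‖T‖. -/
/-!
Fix unit vectors `x`, `y` with `⟪x, y⟫ = q` and let `P` be the orthogonal projection onto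
`span {T x}`, which lies in `ker T` because `T² = 0`. Then `⟪T x, y⟫ = ⟪T (1 - P) x, P y⟫`, so
`|⟪T x, y⟫| ≤ ‖P y‖ ‖(1 - P) x‖ ‖T‖`, while `|q| ≤ ‖P y‖ ‖P x‖ + ‖(1 - P) y‖ ‖(1 - P) x‖`.
What remains concerns the unit vectors `(‖P x‖, ‖(1 - P) x‖)` and `(‖P y‖, ‖(1 - P) y‖)` of `ℝ²`:
their inner product is at least `|q|`, so by Lagrange's identity their cross product is at most
`√(1 - |q|²)`; adding the Cauchy–Schwarz bound `‖P y‖ ‖(1 - P) x‖ + ‖(1 - P) y‖ ‖P x‖ ≤ 1` gives the claim.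
-/

noncomputable section

lemma mul_le_one_add_sqrt_one_sub_sq_div_two {p₁ p₂ q₁ q₂ Q : ℝ}
    (hp : p₁ ^ 2 + p₂ ^ 2 = 1) (hq : q₁ ^ 2 + q₂ ^ 2 = 1) (hQ : 0 ≤ Q)
    (hpq : Q ≤ q₁ * p₁ + q₂ * p₂) :
    q₁ * p₂ ≤ (1 + √(1 - Q ^ 2)) / 2 := by
  have lagrange : (q₁ * p₂ - q₂ * p₁) ^ 2 + (q₁ * p₁ + q₂ * p₂) ^ 2 = 1 := by
    linear_combination (q₁ ^ 2 + q₂ ^ 2) * hp + hq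
  have hdiff : q₁ * p₂ - q₂ * p₁ ≤ √(1 - Q ^ 2) :=
    Real.le_sqrt_of_sq_le (by nlinarith)
  have hsum : q₁ * p₂ + q₂ * p₁ ≤ 1 := by
    nlinarith [sq_nonneg (q₁ - p₂), sq_nonneg (q₂ - p₁)]
  linarith

namespace Submodule

variable {𝕜 E : Type*} [RCLike 𝕜] [NormedAddCommGroup E] [InnerProductSpace 𝕜 E]
  (K : Submodule 𝕜 E) [K.HasOrthogonalProjection]

lemma inner_eq_inner_starProjection_add_inner_starProjection_orthogonal (x y : E) :
    inner 𝕜 y x = inner 𝕜 (K.starProjection y) (K.starProjection x)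
      + inner 𝕜 (Kᗮ.starProjection y) (Kᗮ.starProjection x) := by
  conv_lhs => rw [← K.starProjection_add_starProjection_orthogonal x,
    ← K.starProjection_add_starProjection_orthogonal y]
  rw [inner_add_left, inner_add_right, inner_add_right,
    inner_right_of_mem_orthogonal (K.starProjection_apply_mem y) (Kᗮ.starProjection_apply_mem x),
    inner_left_of_mem_orthogonal (K.starProjection_apply_mem x) (Kᗮ.starProjection_apply_mem y)]
  ring

lemma norm_inner_le_starProjection (x y : E) :
    ‖inner 𝕜 y x‖ ≤ ‖K.starProjection y‖ * ‖K.starProjection x‖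
      + ‖Kᗮ.starProjection y‖ * ‖Kᗮ.starProjection x‖ := by
  rw [K.inner_eq_inner_starProjection_add_inner_starProjection_orthogonal x y]
  exact (norm_add_le _ _).trans (add_le_add (norm_inner_le_norm _ _) (norm_inner_le_norm _ _))

end Submodule

namespace ContinuousLinearMap

open Submodule

variable {𝕜 E : Type*} [RCLike 𝕜] [NormedAddCommGroup E] [InnerProductSpace 𝕜 E]

lemma norm_inner_apply_le_of_mul_self_eq_zero (T : E →L[𝕜] E) (hT : T * T = 0) (x y : E) :
    ‖inner 𝕜 y (T x)‖ ≤
      ‖(𝕜 ∙ T x).starProjection y‖ * ‖(𝕜 ∙ T x)ᗮ.starProjection x‖ * ‖T‖ := by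
  set K := 𝕜 ∙ T x
  have hTP : T (K.starProjection x) = 0 := by
    obtain ⟨c, hc⟩ := mem_span_singleton.1 (K.starProjection_apply_mem x)
    have hTT : T (T x) = 0 := by simpa using congr($hT x)
    rw [← hc, map_smul, hTT, smul_zero]
  have hTx : T x = T (Kᗮ.starProjection x) := by
    rw [starProjection_orthogonal_val, map_sub, hTP, sub_zero]
  have hy : inner 𝕜 y (T x) = inner 𝕜 (K.starProjection y) (T x) := by
    rw [inner_starProjection_left_eq_right,
      starProjection_eq_self_iff.2 (mem_span_singleton_self (T x))]
  calc ‖inner 𝕜 y (T x)‖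
      = ‖inner 𝕜 (K.starProjection y) (T (Kᗮ.starProjection x))‖ := by rw [hy, ← hTx]
    _ ≤ ‖K.starProjection y‖ * (‖T‖ * ‖Kᗮ.starProjection x‖) :=
        (norm_inner_le_norm _ _).trans (by gcongr; exact T.le_opNorm _)
    _ = ‖K.starProjection y‖ * ‖Kᗮ.starProjection x‖ * ‖T‖ := by ring

lemma norm_inner_apply_le_of_mul_self_eq_zero_of_norm_eq_one (T : E →L[𝕜] E) (hT : T * T = 0)
    {x y : E} (hx : ‖x‖ = 1) (hy : ‖y‖ = 1) :
    ‖inner 𝕜 y (T x)‖ ≤ (1 + √(1 - ‖inner 𝕜 y x‖ ^ 2)) / 2 * ‖T‖ := by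
  set K := 𝕜 ∙ T x
  refine (T.norm_inner_apply_le_of_mul_self_eq_zero hT x y).trans ?_
  gcongr
  refine mul_le_one_add_sqrt_one_sub_sq_div_two ?_ ?_ (norm_nonneg _)
    (K.norm_inner_le_starProjection x y)
  · rw [← K.norm_sq_eq_add_norm_sq_starProjection x, hx, one_pow]
  · rw [← K.norm_sq_eq_add_norm_sq_starProjection y, hy, one_pow]

end ContinuousLinearMap

theorem stmt_15_general {H : Type*} [NormedAddCommGroup H] [InnerProductSpace ℂ H]
    (T : H →L[ℂ] H) (hT2 : T * T = 0)
    (q : ℂ) :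
    wq q T ≤ (1 + Real.sqrt (1 - ‖q‖ ^ 2)) / 2 * ‖T‖ := by
  refine Real.sSup_le ?_ (by positivity)
  rintro _ ⟨_, ⟨x, y, hx, hy, rfl, rfl⟩, rfl⟩
  exact T.norm_inner_apply_le_of_mul_self_eq_zero_of_norm_eq_one hT2 hx hy

theorem stmt_15 {H : Type*} [NormedAddCommGroup H] [InnerProductSpace ℂ H] [CompleteSpace H]
    (T : H →L[ℂ] H) (hT2 : T * T = 0)
    (q : ℂ) (hq : ‖q‖ ≤ 1) :
    wq q T ≤ (1 + Real.sqrt (1 - ‖q‖ ^ 2)) / 2 * ‖T‖ :=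
  stmt_15_general T hT2 q
end
end

section
/- Let H be a nontrivial complex Hilbert space, let S be a compact self-adjoint bounded operator on H, let q ∈ [0,1], and let K = H ⊕ H be the Hilbert-space direct sum. Define the bounded operator T on K by T(x₁, x₂) = (S x₂, 0). Then w_q(T) = ((1 + √(1−q²))/2)·‖S‖. -/
/-!
Write `x = (x₁, x₂)` and `y = (y₁, y₂)`. Then `⟨T x, y⟩ = ⟨S x₂, y₁⟩` has modulus at most
`‖x₂‖ ‖y₁‖ ‖S‖`, and for unit vectors with `|⟨x, y⟩| ≥ q` Lagrange's identity in `ℝ²` gives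
`‖x₂‖ ‖y₁‖ ≤ (1 + √(1 - q²)) / 2`. Conversely, choosing `a² + b² = 1` with `2ab = q`, the pair
`x = (a v, b u)`, `y = (b v, a u)` is admissible and gives `⟨T x, y⟩ = b² ⟨S u, v⟩` with
`b² = (1 + √(1 - q²)) / 2`; the supremum of `|⟨S u, v⟩|` over unit `u, v` is `‖S‖`.
-/

noncomputable section

theorem mul_le_of_sq_add_sq_eq_one {a b c d q : ℝ} (hab : a ^ 2 + b ^ 2 = 1)
    (hcd : c ^ 2 + d ^ 2 = 1) (hq0 : 0 ≤ q) (hq : q ≤ a * c + b * d) :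
    b * c ≤ (1 + √(1 - q ^ 2)) / 2 := by
  -- Lagrange's identity: `(ac + bd, bc - ad)` and `(ac - bd, bc + ad)` are both unit vectors.
  have hlagrange : (a * c + b * d) ^ 2 + (b * c - a * d) ^ 2 = 1 := by
    linear_combination (c ^ 2 + d ^ 2) * hab + hcd
  have hminus : |b * c - a * d| ≤ √(1 - q ^ 2) :=
    Real.abs_le_sqrt (by nlinarith [mul_self_le_mul_self hq0 hq])
  have hplus : |b * c + a * d| ≤ 1 := by
    rw [← sq_le_one_iff_abs_le_one]
    nlinarith [sq_nonneg (a * c - b * d)]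
  linarith [le_abs_self (b * c - a * d), le_abs_self (b * c + a * d)]

theorem exists_sq_add_sq_eq_one_two_mul_eq {q : ℝ} (hq0 : 0 ≤ q) (hq1 : q ≤ 1) :
    ∃ a b : ℝ, a ^ 2 + b ^ 2 = 1 ∧ 2 * a * b = q ∧ b ^ 2 = (1 + √(1 - q ^ 2)) / 2 := by
  set r := √(1 - q ^ 2)
  have hr2 : r ^ 2 = 1 - q ^ 2 := Real.sq_sqrt (by nlinarith)
  have hr1 : r ≤ 1 := Real.sqrt_le_one.mpr (by nlinarith)
  have ha2 : √((1 - r) / 2) ^ 2 = (1 - r) / 2 := Real.sq_sqrt (by linarith)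
  have hb2 : √((1 + r) / 2) ^ 2 = (1 + r) / 2 := Real.sq_sqrt (by positivity)
  refine ⟨√((1 - r) / 2), √((1 + r) / 2), by linarith, ?_, hb2⟩
  rw [← Real.sqrt_sq hq0, ← Real.sqrt_mul_self (by positivity : (0 : ℝ) ≤ 2), mul_assoc,
    ← Real.sqrt_mul (by positivity), ← Real.sqrt_mul (by positivity)]
  congr 1
  nlinarith

theorem WithLp.norm_prod_inner_le {𝕜 E F : Type*} [RCLike 𝕜] [NormedAddCommGroup E]
    [InnerProductSpace 𝕜 E] [NormedAddCommGroup F] [InnerProductSpace 𝕜 F]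
    (x y : WithLp 2 (E × F)) :
    ‖(inner 𝕜 x y : 𝕜)‖ ≤ ‖x.fst‖ * ‖y.fst‖ + ‖x.snd‖ * ‖y.snd‖ := by
  rw [WithLp.prod_inner_apply]
  exact (norm_add_le _ _).trans (add_le_add (norm_inner_le_norm _ _) (norm_inner_le_norm _ _))

section CornerOperator

variable {H : Type*} [NormedAddCommGroup H] [InnerProductSpace ℂ H] {S : H →L[ℂ] H}
  {T : WithLp 2 (H × H) →L[ℂ] WithLp 2 (H × H)} {q : ℝ}

theorem inner_apply_eq_inner_fst_apply_snd (hT : ∀ p, T p = WithLp.toLp 2 (S p.snd, 0))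
    (x y : WithLp 2 (H × H)) : inner ℂ y (T x) = inner ℂ y.fst (S x.snd) := by
  simp [hT, WithLp.prod_inner_apply]

theorem norm_le_of_mem_Wq (hT : ∀ p, T p = WithLp.toLp 2 (S p.snd, 0)) (hq0 : 0 ≤ q) {z : ℂ}
    (hz : z ∈ Wq (q : ℂ) T) : ‖z‖ ≤ (1 + √(1 - q ^ 2)) / 2 * ‖S‖ := by
  obtain ⟨x, y, hx, hy, hyx, rfl⟩ := hz
  have hx2 : ‖x.fst‖ ^ 2 + ‖x.snd‖ ^ 2 = 1 := by rw [← WithLp.prod_norm_sq_eq_of_L2, hx, one_pow]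
  have hy2 : ‖y.fst‖ ^ 2 + ‖y.snd‖ ^ 2 = 1 := by rw [← WithLp.prod_norm_sq_eq_of_L2, hy, one_pow]
  have hq := WithLp.norm_prod_inner_le (𝕜 := ℂ) y x
  rw [hyx, Complex.norm_real, Real.norm_of_nonneg hq0, mul_comm ‖y.fst‖, mul_comm ‖y.snd‖] at hq
  calc ‖inner ℂ y (T x)‖ = ‖inner ℂ y.fst (S x.snd)‖ := by
        rw [inner_apply_eq_inner_fst_apply_snd hT]
    _ ≤ ‖y.fst‖ * (‖S‖ * ‖x.snd‖) :=
        (norm_inner_le_norm _ _).trans (by gcongr; exact S.le_opNorm _)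
    _ = ‖x.snd‖ * ‖y.fst‖ * ‖S‖ := by ring
    _ ≤ (1 + √(1 - q ^ 2)) / 2 * ‖S‖ := by
        gcongr
        exact mul_le_of_sq_add_sq_eq_one hx2 hy2 hq0 hq

theorem ofReal_mul_inner_mem_Wq (hT : ∀ p, T p = WithLp.toLp 2 (S p.snd, 0)) (hq0 : 0 ≤ q)
    (hq1 : q ≤ 1) {u v : H} (hu : ‖u‖ = 1) (hv : ‖v‖ = 1) :
    (((1 + √(1 - q ^ 2)) / 2 : ℝ) : ℂ) * inner ℂ v (S u) ∈ Wq (q : ℂ) T := by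
  obtain ⟨a, b, hab, hq, hb⟩ := exists_sq_add_sq_eq_one_two_mul_eq hq0 hq1
  have hunit : ∀ s t : ℝ, s ^ 2 + t ^ 2 = 1 →
      ‖WithLp.toLp 2 ((s : ℂ) • v, (t : ℂ) • u)‖ = 1 := fun s t hst => by
    rw [← pow_eq_one_iff_of_nonneg (norm_nonneg _) two_ne_zero, WithLp.prod_norm_sq_eq_of_L2]
    simp [norm_smul, hu, hv, hst]
  refine ⟨_, _, hunit a b hab, hunit b a (by linarith), ?_, ?_⟩
  · simp only [WithLp.prod_inner_apply, inner_smul_left, inner_smul_right, Complex.conj_ofReal,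
      inner_self_eq_norm_sq_to_K, hu, hv]
    push_cast [← hq]
    ring
  · simp only [inner_apply_eq_inner_fst_apply_snd hT, WithLp.toLp_fst, WithLp.toLp_snd, map_smul,
      inner_smul_left, inner_smul_right, Complex.conj_ofReal]
    push_cast [← hb]
    ring

theorem wq_le (hT : ∀ p, T p = WithLp.toLp 2 (S p.snd, 0)) (hq0 : 0 ≤ q) :
    wq (q : ℂ) T ≤ (1 + √(1 - q ^ 2)) / 2 * ‖S‖ := by
  refine Real.sSup_le ?_ (by positivity)
  rintro _ ⟨z, hz, rfl⟩
  exact norm_le_of_mem_Wq hT hq0 hz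

theorem le_wq (hT : ∀ p, T p = WithLp.toLp 2 (S p.snd, 0)) (hq0 : 0 ≤ q) (hq1 : q ≤ 1) :
    (1 + √(1 - q ^ 2)) / 2 * ‖S‖ ≤ wq (q : ℂ) T := by
  set c := (1 + √(1 - q ^ 2)) / 2
  have hc : 0 < c := by positivity
  have hbdd : BddAbove ((fun z : ℂ => ‖z‖) '' Wq (q : ℂ) T) :=
    ⟨c * ‖S‖, by rintro _ ⟨z, hz, rfl⟩; exact norm_le_of_mem_Wq hT hq0 hz⟩
  rw [mul_comm, ← le_div_iff₀ hc]
  refine S.opNorm_le_of_re_inner_le (div_nonneg (Real.sSup_nonneg ?_) hc.le) fun u v hu hv => ?_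
  · rintro _ ⟨z, -, rfl⟩
    exact norm_nonneg z
  rw [le_div_iff₀ hc, mul_comm]
  calc c * RCLike.re (inner ℂ (S u) v) ≤ c * ‖inner ℂ v (S u)‖ := by
        gcongr
        exact (RCLike.re_le_norm _).trans (norm_inner_symm _ _).le
    _ = ‖(c : ℂ) * inner ℂ v (S u)‖ := by simp [abs_of_pos hc]
    _ ≤ wq (q : ℂ) T := le_csSup hbdd ⟨_, ofReal_mul_inner_mem_Wq hT hq0 hq1 hu hv, rfl⟩

end CornerOperator

theorem stmt_18_general {H : Type*} [NormedAddCommGroup H] [InnerProductSpace ℂ H]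
    (S : H →L[ℂ] H)
    (q : ℝ) (hq0 : 0 ≤ q) (hq1 : q ≤ 1)
    (T : WithLp 2 (H × H) →L[ℂ] WithLp 2 (H × H))
    (hT : ∀ p : WithLp 2 (H × H),
      T p = (WithLp.equiv 2 (H × H)).symm (S ((WithLp.equiv 2 (H × H)) p).2, 0)) :
    wq (q : ℂ) T = (1 + Real.sqrt (1 - q ^ 2)) / 2 * ‖S‖ :=
  le_antisymm (wq_le hT hq0) (le_wq hT hq0 hq1)

theorem stmt_18 {H : Type*} [NormedAddCommGroup H] [InnerProductSpace ℂ H] [CompleteSpace H]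
    [Nontrivial H]
    (S : H →L[ℂ] H) (hScompact : IsCompactOperator S) (hSsa : IsSelfAdjoint S)
    (q : ℝ) (hq0 : 0 ≤ q) (hq1 : q ≤ 1)
    (T : WithLp 2 (H × H) →L[ℂ] WithLp 2 (H × H))
    (hT : ∀ p : WithLp 2 (H × H),
      T p = (WithLp.equiv 2 (H × H)).symm (S ((WithLp.equiv 2 (H × H)) p).2, 0)) :
    wq (q : ℂ) T = (1 + Real.sqrt (1 - q ^ 2)) / 2 * ‖S‖ :=
  stmt_18_general S q hq0 hq1 T hT
end
end

section
/- Let H₁, H₂, H₃ be complex Hilbert spaces, let S₁ : H₂ → H₁ and S₂ : H₃ → H₂ be bounded operators, let K = H₁ ⊕ H₂ ⊕ H₃ be the Hilbert-space direct sum, and define the bounded operator T on K by T(x₁, x₂, x₃) = (S₁ x₂, S₂ x₃, 0). Let q ∈ D and set M = max{‖S₁‖, ‖S₂‖}. Then w_q(T) ≤ √2·M if |q| ≤ 1/√2, and w_q(T) ≤ ((√2 + |q| + √(1−|q|²))/2)·M if |q| > 1/√2. -/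
/-
The bounds claimed are at least `M`, so it suffices that `w_q(T) ≤ ‖T‖ ≤ M`: the first holds for
every `q` by Cauchy–Schwarz, the second because `‖T x‖² = ‖S₁ x₂‖² + ‖S₂ x₃‖² ≤ M² ‖x‖²`.
-/

noncomputable section

open WithLp

theorem WithLp.prod_norm_le_mul_of_le {α β γ δ : Type*}
    [SeminormedAddCommGroup α] [SeminormedAddCommGroup β]
    [SeminormedAddCommGroup γ] [SeminormedAddCommGroup δ]
    {c : ℝ} (hc : 0 ≤ c) {x : WithLp 2 (α × β)} {y : WithLp 2 (γ × δ)}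
    (h₁ : ‖x.fst‖ ≤ c * ‖y.fst‖) (h₂ : ‖x.snd‖ ≤ c * ‖y.snd‖) : ‖x‖ ≤ c * ‖y‖ := by
  refine le_of_sq_le_sq ?_ (by positivity)
  have h₁' := pow_le_pow_left₀ (norm_nonneg _) h₁ 2
  have h₂' := pow_le_pow_left₀ (norm_nonneg _) h₂ 2
  rw [prod_norm_sq_eq_of_L2, mul_pow, prod_norm_sq_eq_of_L2]
  linarith

theorem norm_blockShift_le {H₁ H₂ H₃ : Type*}
    [SeminormedAddCommGroup H₁] [SeminormedAddCommGroup H₂] [SeminormedAddCommGroup H₃]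
    [NormedSpace ℂ H₁] [NormedSpace ℂ H₂] [NormedSpace ℂ H₃]
    (S₁ : H₂ →L[ℂ] H₁) (S₂ : H₃ →L[ℂ] H₂) (p : WithLp 2 (H₁ × WithLp 2 (H₂ × H₃))) :
    ‖toLp 2 (S₁ p.snd.fst, toLp 2 (S₂ p.snd.snd, (0 : H₃)))‖ ≤ max ‖S₁‖ ‖S₂‖ * ‖p‖ := by
  have hM : 0 ≤ max ‖S₁‖ ‖S₂‖ := (norm_nonneg _).trans (le_max_left _ _)
  calc _ ≤ max ‖S₁‖ ‖S₂‖ * ‖p.snd‖ := by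
        refine prod_norm_le_mul_of_le hM ?_ ?_
        · exact S₁.le_of_opNorm_le (le_max_left _ _) _
        · rw [toLp_snd, norm_toLp_fst]
          exact S₂.le_of_opNorm_le (le_max_right _ _) _
    _ ≤ max ‖S₁‖ ‖S₂‖ * ‖p‖ := by gcongr; exact p.norm_snd_le

theorem wq_le_opNorm {E : Type*} [NormedAddCommGroup E] [InnerProductSpace ℂ E]
    (q : ℂ) (T : E →L[ℂ] E) : wq q T ≤ ‖T‖ := by
  refine Real.sSup_le ?_ (norm_nonneg T)
  rintro _ ⟨_, ⟨x, y, hx, hy, -, rfl⟩, rfl⟩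
  calc ‖(inner ℂ y (T x) : ℂ)‖ ≤ ‖y‖ * ‖T x‖ := norm_inner_le_norm y (T x)
    _ ≤ 1 * (‖T‖ * ‖x‖) := by rw [hy]; gcongr; exact T.le_opNorm x
    _ = ‖T‖ := by rw [hx]; ring

theorem one_le_sqrt_two_add_sqrt_one_sub_sq_div_two {r : ℝ} (hr : 1 / Real.sqrt 2 < r) :
    1 ≤ (Real.sqrt 2 + r + Real.sqrt (1 - r ^ 2)) / 2 := by
  have h2 : Real.sqrt 2 ^ 2 = 2 := Real.sq_sqrt (by norm_num)
  have hr' : 1 < r * Real.sqrt 2 := by rwa [div_lt_iff₀ (by positivity)] at hr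
  nlinarith [Real.sqrt_nonneg (1 - r ^ 2), Real.sqrt_nonneg 2, sq_nonneg (Real.sqrt 2 - 3 / 2)]

theorem stmt_19_general {H₁ H₂ H₃ : Type*}
    [NormedAddCommGroup H₁] [InnerProductSpace ℂ H₁]
    [NormedAddCommGroup H₂] [InnerProductSpace ℂ H₂]
    [NormedAddCommGroup H₃] [InnerProductSpace ℂ H₃]
    (S₁ : H₂ →L[ℂ] H₁) (S₂ : H₃ →L[ℂ] H₂)
    (q : ℂ)
    (T : WithLp 2 (H₁ × WithLp 2 (H₂ × H₃)) →L[ℂ] WithLp 2 (H₁ × WithLp 2 (H₂ × H₃)))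
    (hT : ∀ p : WithLp 2 (H₁ × WithLp 2 (H₂ × H₃)),
      T p = (WithLp.equiv 2 (H₁ × WithLp 2 (H₂ × H₃))).symm
        (S₁ ((WithLp.equiv 2 (H₂ × H₃)) ((WithLp.equiv 2 (H₁ × WithLp 2 (H₂ × H₃)) p).2)).1,
          (WithLp.equiv 2 (H₂ × H₃)).symm
            (S₂ ((WithLp.equiv 2 (H₂ × H₃))
              ((WithLp.equiv 2 (H₁ × WithLp 2 (H₂ × H₃)) p).2)).2, 0))) :
    (‖q‖ ≤ 1 / Real.sqrt 2 → wq q T ≤ Real.sqrt 2 * max ‖S₁‖ ‖S₂‖) ∧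
      (1 / Real.sqrt 2 < ‖q‖ →
        wq q T ≤ (Real.sqrt 2 + ‖q‖ + Real.sqrt (1 - ‖q‖ ^ 2)) / 2 *
          max ‖S₁‖ ‖S₂‖) := by
  have hM : 0 ≤ max ‖S₁‖ ‖S₂‖ := (norm_nonneg _).trans (le_max_left _ _)
  have hw : wq q T ≤ max ‖S₁‖ ‖S₂‖ :=
    (wq_le_opNorm q T).trans <| T.opNorm_le_bound hM fun p => by
      rw [hT]; exact norm_blockShift_le S₁ S₂ p
  refine ⟨fun _ => hw.trans (le_mul_of_one_le_left hM ?_),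
    fun hq => hw.trans (le_mul_of_one_le_left hM ?_)⟩
  · exact Real.one_le_sqrt.mpr one_le_two
  · exact one_le_sqrt_two_add_sqrt_one_sub_sq_div_two hq

theorem stmt_19 {H₁ H₂ H₃ : Type*}
    [NormedAddCommGroup H₁] [InnerProductSpace ℂ H₁]
    [NormedAddCommGroup H₂] [InnerProductSpace ℂ H₂]
    [NormedAddCommGroup H₃] [InnerProductSpace ℂ H₃]
    (S₁ : H₂ →L[ℂ] H₁) (S₂ : H₃ →L[ℂ] H₂)
    (q : ℂ) (hq : ‖q‖ ≤ 1)
    (T : WithLp 2 (H₁ × WithLp 2 (H₂ × H₃)) →L[ℂ] WithLp 2 (H₁ × WithLp 2 (H₂ × H₃)))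
    (hT : ∀ p : WithLp 2 (H₁ × WithLp 2 (H₂ × H₃)),
      T p = (WithLp.equiv 2 (H₁ × WithLp 2 (H₂ × H₃))).symm
        (S₁ ((WithLp.equiv 2 (H₂ × H₃)) ((WithLp.equiv 2 (H₁ × WithLp 2 (H₂ × H₃)) p).2)).1,
          (WithLp.equiv 2 (H₂ × H₃)).symm
            (S₂ ((WithLp.equiv 2 (H₂ × H₃))
              ((WithLp.equiv 2 (H₁ × WithLp 2 (H₂ × H₃)) p).2)).2, 0))) :
    (‖q‖ ≤ 1 / Real.sqrt 2 → wq q T ≤ Real.sqrt 2 * max ‖S₁‖ ‖S₂‖) ∧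
      (1 / Real.sqrt 2 < ‖q‖ →
        wq q T ≤ (Real.sqrt 2 + ‖q‖ + Real.sqrt (1 - ‖q‖ ^ 2)) / 2 *
          max ‖S₁‖ ‖S₂‖) :=
  stmt_19_general S₁ S₂ q T hT
end
end
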